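/- arXiv:2601.11728 — 4 statements merged into one kernel-verified Lean document; each statement's English description precedes it below -/
import Mathlib

section
/- Let S be a complex inner product space with skew-Hermitian Clifford action c of ℝ^n, and let u ∈ S. For x in the open unit ball of ℝ^n define ζ(x) := ω(x)^{-1/2}(1 - i c(x))u, where ω(x) = (1 - |x|²)/2. Then |ζ(x)|² = 2(V₀(x)|u|² - Σ_{j=1}^n V_j(x)·⟨i c(e_j)u, u⟩), where V₀(x) = (1+|x|²)/(1-|x|²) and V_j(x) = 2x^j/(1-|x|²). -/
/-!
The operator `H = i c(x)` is symmetric, and the Clifford relations give `H² = |x|²`, so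
`‖u - H u‖² = |u|² - 2 Re⟪u, H u⟫ + |x|² |u|²` with `Re⟪u, H u⟫ = Σ_j x^j Re⟪i c(e_j) u, u⟫`.
Dividing by `ω(x) = (1 - |x|²)/2` splits this into `2 (V₀ |u|² - Σ_j V_j Re⟪i c(e_j) u, u⟫)`.
-/

local notation "⟪" x ", " y "⟫" => @inner ℂ _ _ x y

section CliffordRelation

variable {ι K A : Type*} [Fintype ι] [DecidableEq ι] [Field K] [CharZero K] [Ring A]
  [Algebra K A]

theorem sum_smul_mul_self_of_clifford (e : ι → A)
    (he : ∀ i j, e i * e j + e j * e i = if i = j then (-2 : K) • 1 else 0) (x : ι → K) :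
    (∑ i, x i • e i) * (∑ i, x i • e i) = -(∑ i, x i ^ 2) • (1 : A) := by
  set s := ∑ i, x i • e i
  have hexp : s * s = ∑ i, ∑ j, (x i * x j) • (e i * e j) := by
    simp only [s, Finset.sum_mul_sum, smul_mul_smul_comm]
  have hswap : s * s = ∑ i, ∑ j, (x i * x j) • (e j * e i) := by
    rw [hexp, Finset.sum_comm]
    exact Finset.sum_congr rfl fun j _ => Finset.sum_congr rfl fun i _ => by rw [mul_comm (x i)]
  -- symmetrising the double sum turns every product into an anticommutator
  have htwice : (2 : K) • (s * s) = (2 : K) • (-(∑ i, x i ^ 2) • (1 : A)) := by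
    calc (2 : K) • (s * s) = s * s + s * s := two_smul K _
      _ = ∑ i, ∑ j, (x i * x j) • (e i * e j + e j * e i) := by
        nth_rewrite 1 [hexp]
        rw [hswap]
        simp only [smul_add, Finset.sum_add_distrib]
      _ = (2 : K) • (-(∑ i, x i ^ 2) • (1 : A)) := by
        simp only [he, smul_ite, smul_zero, Finset.sum_ite_eq, Finset.mem_univ, if_true,
          smul_smul, ← Finset.sum_smul]
        congr 1
        rw [mul_neg, Finset.mul_sum, ← Finset.sum_neg_distrib]
        exact Finset.sum_congr rfl fun i _ => by ring
  exact smul_right_injective A two_ne_zero htwice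

end CliffordRelation

namespace LinearMap.IsSymmetric

variable {𝕜 E : Type*} [RCLike 𝕜] [NormedAddCommGroup E] [InnerProductSpace 𝕜 E]

protected theorem sum {ι : Type*} (s : Finset ι) {T : ι → E →ₗ[𝕜] E}
    (hT : ∀ i ∈ s, (T i).IsSymmetric) : (∑ i ∈ s, T i).IsSymmetric :=
  Finset.sum_induction T IsSymmetric (fun _ _ ha hb => ha.add hb) IsSymmetric.zero hT

theorem norm_apply_sq_of_mul_self {T : E →ₗ[𝕜] E} (hT : T.IsSymmetric) {r : ℝ}
    (hr : T * T = (r : 𝕜) • 1) (u : E) : ‖T u‖ ^ 2 = r * ‖u‖ ^ 2 := by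
  rw [← inner_self_eq_norm_sq (𝕜 := 𝕜), hT, ← Module.End.mul_apply, hr,
    LinearMap.smul_apply, Module.End.one_apply, inner_smul_right, RCLike.re_ofReal_mul,
    inner_self_eq_norm_sq]

end LinearMap.IsSymmetric

section SkewOperators

variable {E : Type*} [NormedAddCommGroup E] [InnerProductSpace ℂ E]

theorem isSymmetric_I_smul_of_skew {T : E →ₗ[ℂ] E} (hT : ∀ φ ψ, ⟪T φ, ψ⟫ = -⟪φ, T ψ⟫) :
    (Complex.I • T).IsSymmetric := by
  intro φ ψ
  simp only [LinearMap.smul_apply, inner_smul_left, inner_smul_right, hT, Complex.conj_I]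
  ring

variable {ι : Type*} [Fintype ι] {c : ι → E →ₗ[ℂ] E}

theorem I_smul_sum_ofReal_smul (x : ι → ℝ) :
    Complex.I • ∑ j, (x j : ℂ) • c j = ∑ j, (x j : ℂ) • (Complex.I • c j) := by
  simp only [Finset.smul_sum, smul_comm Complex.I]

theorem isSymmetric_I_smul_sum_ofReal_smul (hc : ∀ j φ ψ, ⟪c j φ, ψ⟫ = -⟪φ, c j ψ⟫)
    (x : ι → ℝ) : (Complex.I • ∑ j, (x j : ℂ) • c j).IsSymmetric := by
  rw [I_smul_sum_ofReal_smul]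
  exact LinearMap.IsSymmetric.sum _ fun j _ =>
    (isSymmetric_I_smul_of_skew (hc j)).smul (Complex.conj_ofReal _)

theorem re_inner_I_smul_sum_ofReal_smul_apply (hc : ∀ j φ ψ, ⟪c j φ, ψ⟫ = -⟪φ, c j ψ⟫)
    (x : ι → ℝ) (u : E) :
    (⟪u, (Complex.I • ∑ j, (x j : ℂ) • c j) u⟫).re
      = ∑ j, x j * (⟪Complex.I • c j u, u⟫).re := by
  rw [← isSymmetric_I_smul_sum_ofReal_smul hc, I_smul_sum_ofReal_smul, LinearMap.sum_apply,
    sum_inner, Complex.re_sum]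
  refine Finset.sum_congr rfl fun j _ => ?_
  simp only [LinearMap.smul_apply]
  rw [inner_smul_left, Complex.conj_ofReal, Complex.re_ofReal_mul]

end SkewOperators

/-- For `ζ(x) = ω(x)^{-1/2}(1 - i c(x))u` with `ω(x) = (1-|x|²)/2` on the open unit
ball, `|ζ(x)|² = 2(V₀(x)|u|² - Σ_j V_j(x)⟨i c(e_j)u, u⟩)` where
`V₀(x) = (1+|x|²)/(1-|x|²)` and `V_j(x) = 2x^j/(1-|x|²)`. -/
theorem stmt6 {n : ℕ} {S : Type*} [NormedAddCommGroup S] [InnerProductSpace ℂ S]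
    (c : Fin n → S →ₗ[ℂ] S)
    (hskew : ∀ j (φ ψ : S), ⟪c j φ, ψ⟫ = -⟪φ, c j ψ⟫)
    (hcliff : ∀ i j, c i ∘ₗ c j + c j ∘ₗ c i
      = if i = j then (-2 : ℂ) • LinearMap.id else 0)
    (u : S) (x : EuclideanSpace ℝ (Fin n)) (hx : ‖x‖ < 1)
    (ζ : S)
    (hζ : ζ = ((Real.sqrt ((1 - ‖x‖ ^ 2) / 2))⁻¹ : ℝ) •
        (u - Complex.I • ∑ j, (x j : ℂ) • c j u)) :
    ‖ζ‖ ^ 2 = 2 * (((1 + ‖x‖ ^ 2) / (1 - ‖x‖ ^ 2)) * ‖u‖ ^ 2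
      - ∑ j, (2 * x j / (1 - ‖x‖ ^ 2)) * (⟪Complex.I • c j u, u⟫).re) := by
  have hx2 : ‖x‖ ^ 2 < 1 := pow_lt_one₀ (norm_nonneg x) hx two_ne_zero
  set T : S →ₗ[ℂ] S := ∑ j, (x j : ℂ) • c j
  have hTT : T * T = -((‖x‖ ^ 2 : ℝ) : ℂ) • 1 := by
    rw [sum_smul_mul_self_of_clifford c (fun i j => by
      simpa [Module.End.mul_eq_comp, Module.End.one_eq_id] using hcliff i j),
      EuclideanSpace.real_norm_sq_eq]
    push_cast
    rfl
  have hnorm : ‖(Complex.I • T) u‖ ^ 2 = ‖x‖ ^ 2 * ‖u‖ ^ 2 :=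
    (isSymmetric_I_smul_sum_ofReal_smul hskew x).norm_apply_sq_of_mul_self (by
      rw [smul_mul_smul_comm, hTT, smul_smul, Complex.I_mul_I]; simp) u
  have hζsq : ‖ζ‖ ^ 2 = ((1 - ‖x‖ ^ 2) / 2)⁻¹ * ‖u - (Complex.I • T) u‖ ^ 2 := by
    rw [hζ, norm_smul, Real.norm_eq_abs, abs_of_nonneg (by positivity), mul_pow,
      ← Real.sqrt_inv, Real.sq_sqrt (inv_nonneg.2 (by linarith))]
    simp [T, LinearMap.sum_apply]
  rw [hζsq, norm_sub_sq (𝕜 := ℂ), hnorm, RCLike.re_to_complex,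
    re_inner_I_smul_sum_ofReal_smul_apply hskew]
  have hne : 1 - ‖x‖ ^ 2 ≠ 0 := by linarith
  have hV : ∑ j, (2 * x j / (1 - ‖x‖ ^ 2)) * (⟪Complex.I • c j u, u⟫).re
      = 2 / (1 - ‖x‖ ^ 2) * ∑ j, x j * (⟪Complex.I • c j u, u⟫).re := by
    rw [Finset.mul_sum]
    exact Finset.sum_congr rfl fun j _ => by ring
  rw [hV]
  field_simp
  ring
end

section
/- With the notation of the previous construction (ζ(x) = ω(x)^{-1/2}(1 - i c(x))u on the unit ball) and with a chirality operator γ (Hermitian, γ² = Id, anticommuting with all c(e_j)), the function x ↦ ⟨γ ζ(x), ζ(x)⟩ is constant equal to 2⟨γ u, u⟩. -/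
/-! With `C = c(x)`, skewness of `C` and `γC = -Cγ` give `⟨γCu, u⟩ = ⟨γu, Cu⟩`, so the cross terms
of `⟨γ(1 - iC)u, (1 - iC)u⟩` cancel, while `⟨γCu, Cu⟩ = ⟨γu, C²u⟩ = -|x|²⟨γu, u⟩` by the Clifford
relations. Hence `⟨γ(1 - iC)u, (1 - iC)u⟩ = (1 - |x|²)⟨γu, u⟩ = 2ω(x)⟨γu, u⟩`, and the factor
`ω(x)⁻¹` coming from the normalisation of `ζ` turns this into `2⟨γu, u⟩`. -/

local notation "⟪" x ", " y "⟫" => @inner ℂ _ _ x y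

open Complex

section CliffordMul

variable {ι S : Type*} [Fintype ι] [NormedAddCommGroup S] [InnerProductSpace ℂ S]
  {c : ι → S →ₗ[ℂ] S}

def cliffordMul (c : ι → S →ₗ[ℂ] S) (x : EuclideanSpace ℝ ι) : S →ₗ[ℂ] S :=
  ∑ j, (x j : ℂ) • c j

lemma cliffordMul_apply (c : ι → S →ₗ[ℂ] S) (x : EuclideanSpace ℝ ι) (φ : S) :
    cliffordMul c x φ = ∑ j, (x j : ℂ) • c j φ := by
  simp [cliffordMul]

lemma inner_cliffordMul_left (hskew : ∀ j (φ ψ : S), ⟪c j φ, ψ⟫ = -⟪φ, c j ψ⟫)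
    (x : EuclideanSpace ℝ ι) (φ ψ : S) :
    ⟪cliffordMul c x φ, ψ⟫ = -⟪φ, cliffordMul c x ψ⟫ := by
  simp [cliffordMul_apply, hskew]

lemma apply_cliffordMul_of_anticomm {γ : S →ₗ[ℂ] S} (hanti : ∀ j, c j ∘ₗ γ + γ ∘ₗ c j = 0)
    (x : EuclideanSpace ℝ ι) (φ : S) :
    γ (cliffordMul c x φ) = -cliffordMul c x (γ φ) := by
  have h j : γ (c j φ) = -c j (γ φ) :=
    eq_neg_of_add_eq_zero_right (LinearMap.congr_fun (hanti j) φ)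
  simp [cliffordMul_apply, h]

lemma cliffordMul_cliffordMul [DecidableEq ι]
    (hcliff : ∀ i j, c i ∘ₗ c j + c j ∘ₗ c i = if i = j then (-2 : ℂ) • LinearMap.id else 0)
    (x : EuclideanSpace ℝ ι) (φ : S) :
    cliffordMul c x (cliffordMul c x φ) = -((‖x‖ ^ 2 : ℝ) : ℂ) • φ := by
  have hexp : cliffordMul c x (cliffordMul c x φ)
      = ∑ i, ∑ j, ((x i : ℂ) * x j) • c i (c j φ) := by
    rw [cliffordMul_apply c x (cliffordMul c x φ)]
    simp only [cliffordMul_apply, map_sum, map_smul, Finset.smul_sum, smul_smul]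
  have hsymm : (2 : ℂ) • cliffordMul c x (cliffordMul c x φ)
      = ∑ i, ∑ j, ((x i : ℂ) * x j) • (c i ∘ₗ c j + c j ∘ₗ c i) φ := by
    rw [two_smul, hexp]
    nth_rw 2 [Finset.sum_comm]
    simp only [LinearMap.add_apply, LinearMap.comp_apply, smul_add, Finset.sum_add_distrib,
      mul_comm]
  have hsq : (2 : ℂ) • cliffordMul c x (cliffordMul c x φ)
      = (2 : ℂ) • -((‖x‖ ^ 2 : ℝ) : ℂ) • φ := by
    simp_rw [hsymm, hcliff, apply_ite (fun f : S →ₗ[ℂ] S => f φ), EuclideanSpace.real_norm_sq_eq]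
    simp [Finset.sum_smul, Finset.smul_sum, smul_smul, sq, mul_comm]
  exact smul_right_injective _ two_ne_zero hsq

end CliffordMul

lemma inner_sub_I_smul_of_anticomm {S : Type*} [NormedAddCommGroup S] [InnerProductSpace ℂ S]
    {C γ : S →ₗ[ℂ] S} (hskew : ∀ φ ψ : S, ⟪C φ, ψ⟫ = -⟪φ, C ψ⟫) (hanti : ∀ φ, γ (C φ) = -C (γ φ))
    {u : S} {s : ℂ} (hsq : C (C u) = -s • u) :
    ⟪γ (u - I • C u), u - I • C u⟫ = (1 - s) * ⟪γ u, u⟫ := by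
  have hcross : ⟪γ (C u), u⟫ = ⟪γ u, C u⟫ := by
    rw [hanti, inner_neg_left, hskew, neg_neg]
  have hdiag : ⟪γ (C u), C u⟫ = -s * ⟪γ u, u⟫ := by
    rw [hanti, inner_neg_left, hskew, neg_neg, hsq, inner_smul_right]
  simp only [map_sub, map_smul, inner_sub_left, inner_sub_right, inner_smul_left,
    inner_smul_right, hcross, hdiag, conj_I]
  ring_nf
  rw [I_sq]
  ring

lemma inv_sqrt_half_mul_inv_sqrt_half_mul {t : ℝ} (ht : t < 1) :
    (√((1 - t) / 2))⁻¹ * (√((1 - t) / 2))⁻¹ * (1 - t) = 2 := by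
  have hpos : 0 < (1 - t) / 2 := by linarith
  rw [← mul_inv, Real.mul_self_sqrt hpos.le]
  field_simp
  exact div_self (sub_ne_zero.2 ht.ne')

theorem stmt7_general {n : ℕ} {S : Type*} [NormedAddCommGroup S] [InnerProductSpace ℂ S]
    (c : Fin n → S →ₗ[ℂ] S)
    (hskew : ∀ j (φ ψ : S), ⟪c j φ, ψ⟫ = -⟪φ, c j ψ⟫)
    (hcliff : ∀ i j, c i ∘ₗ c j + c j ∘ₗ c i
      = if i = j then (-2 : ℂ) • LinearMap.id else 0)
    (γ : S →ₗ[ℂ] S)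
    (hanti : ∀ j, c j ∘ₗ γ + γ ∘ₗ c j = 0)
    (u : S) (x : EuclideanSpace ℝ (Fin n)) (hx : ‖x‖ < 1)
    (ζ : S)
    (hζ : ζ = ((Real.sqrt ((1 - ‖x‖ ^ 2) / 2))⁻¹ : ℝ) •
        (u - Complex.I • ∑ j, (x j : ℂ) • c j u)) :
    ⟪γ ζ, ζ⟫ = 2 * ⟪γ u, u⟫ := by
  have hx2 : ‖x‖ ^ 2 < 1 := pow_lt_one₀ (norm_nonneg x) hx two_ne_zero
  have hw := inner_sub_I_smul_of_anticomm (inner_cliffordMul_left hskew x)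
    (apply_cliffordMul_of_anticomm hanti x) (cliffordMul_cliffordMul hcliff x u)
  rw [hζ, ← cliffordMul_apply, ← Complex.coe_smul, map_smul, inner_smul_left, inner_smul_right,
    conj_ofReal, hw, ← mul_assoc, ← mul_assoc]
  congr 1
  exact_mod_cast inv_sqrt_half_mul_inv_sqrt_half_mul hx2

/-- For `ζ(x) = ω(x)^{-1/2}(1 - i c(x))u` on the unit ball and a chirality operator `γ`
(Hermitian, `γ² = Id`, anticommuting with every `c(e_j)`), the function
`x ↦ ⟨γ ζ(x), ζ(x)⟩` is constant equal to `2⟨γu, u⟩`. -/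
theorem stmt7 {n : ℕ} {S : Type*} [NormedAddCommGroup S] [InnerProductSpace ℂ S]
    (c : Fin n → S →ₗ[ℂ] S)
    (hskew : ∀ j (φ ψ : S), ⟪c j φ, ψ⟫ = -⟪φ, c j ψ⟫)
    (hcliff : ∀ i j, c i ∘ₗ c j + c j ∘ₗ c i
      = if i = j then (-2 : ℂ) • LinearMap.id else 0)
    (γ : S →ₗ[ℂ] S)
    (hherm : ∀ (φ ψ : S), ⟪γ φ, ψ⟫ = ⟪φ, γ ψ⟫)
    (hinv : γ ∘ₗ γ = LinearMap.id)
    (hanti : ∀ j, c j ∘ₗ γ + γ ∘ₗ c j = 0)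
    (u : S) (x : EuclideanSpace ℝ (Fin n)) (hx : ‖x‖ < 1)
    (ζ : S)
    (hζ : ζ = ((Real.sqrt ((1 - ‖x‖ ^ 2) / 2))⁻¹ : ℝ) •
        (u - Complex.I • ∑ j, (x j : ℂ) • c j u)) :
    ⟪γ ζ, ζ⟫ = 2 * ⟪γ u, u⟫ :=
  stmt7_general c hskew hcliff γ hanti u x hx ζ hζ
end

section
/- Let ∇̄ be a connection on a Dirac bundle with associated Dirac operator D̄ satisfying the Schrödinger–Lichnerowicz formula D̄² = ∇̄*∇̄ + ℛ, and define ∇̃^±_X φ := ∇̄_X φ ± (i/2)c(X)φ and D̃^±φ := Σ_j c(e_j)∇̃^±_{e_j}φ over an n-dimensional Riemannian manifold. Then D̃^± = D̄ ∓ (in/2)Id, (∇̃^±)*∇̃^± = ∇̄*∇̄ + (n/4)Id, and consequently (D̃^±)*D̃^± = (∇̃^±)*∇̃^± + ℛ + (n(n-1)/4)Id. -/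
/-!
Twisting a connection by an imaginary multiple `a` of Clifford multiplication shifts the Dirac
operator by `-(n a) Id`, because `Σ_j c(e_j)² = -n Id`. In the connection Laplacian the cross
terms `a (c ∘ ∇̄_j + (∇̄_j)* ∘ c)` add up to `a (D̄ - D̄*)`, which vanishes since `D̄` is
symmetric, and the square term contributes `-n a² = n/4` for `a = ±i/2`. Finally
`(D̄ - b)*(D̄ - b) = D̄² - b²` for imaginary `b = ±in/2`, and with `D̄² = ∇̄*∇̄ + ℛ` the constant
`n²/4 = n/4 + n(n-1)/4` splits into the shift of the connection Laplacian and the shift of the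
curvature term.
-/

open LinearMap

namespace ModifiedDirac

section Module

variable {ι M : Type*} [Fintype ι] [AddCommGroup M] [Module ℂ M]

def dirac (c del : ι → M →ₗ[ℂ] M) : M →ₗ[ℂ] M := ∑ j, c j ∘ₗ del j

def twist (del c : ι → M →ₗ[ℂ] M) (a : ℂ) : ι → M →ₗ[ℂ] M := fun j => del j + a • c j

theorem comp_self_eq_neg_id {e : M →ₗ[ℂ] M}
    (h : e ∘ₗ e + e ∘ₗ e = (-2 : ℂ) • LinearMap.id) :
    e ∘ₗ e = -LinearMap.id := by
  have h2 : (2 : ℂ) • (e ∘ₗ e) = (2 : ℂ) • -LinearMap.id := by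
    rw [two_smul, h]
    module
  exact smul_right_injective _ two_ne_zero h2

theorem dirac_twist {c : ι → M →ₗ[ℂ] M} (hsq : ∀ j, c j ∘ₗ c j = -LinearMap.id)
    (del : ι → M →ₗ[ℂ] M) (a : ℂ) :
    dirac c (twist del c a) = dirac c del - ((Fintype.card ι : ℂ) * a) • LinearMap.id := by
  simp only [dirac, twist, comp_add, comp_smul, hsq, Finset.sum_add_distrib, ← Finset.smul_sum,
    Finset.sum_neg_distrib, Finset.sum_const, Finset.card_univ, ← Nat.cast_smul_eq_nsmul ℂ]
  module

end Module

variable {ι S : Type*} [Fintype ι] [NormedAddCommGroup S] [InnerProductSpace ℂ S]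
  [FiniteDimensional ℂ S]

noncomputable def connLaplacian (del : ι → S →ₗ[ℂ] S) : S →ₗ[ℂ] S := ∑ j, adjoint (del j) ∘ₗ del j

theorem adjoint_add_smul {A B : S →ₗ[ℂ] S} {a : ℂ} (hB : adjoint B = -B)
    (ha : starRingEnd ℂ a = -a) : adjoint (A + a • B) = adjoint A + a • B := by
  rw [map_add, map_smulₛₗ, ha, hB, smul_neg, neg_smul, neg_neg]

theorem adjoint_sub_smul_id {A : S →ₗ[ℂ] S} {b : ℂ} (ha : starRingEnd ℂ b = -b) :
    adjoint (A - b • LinearMap.id) = adjoint A + b • LinearMap.id := by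
  rw [map_sub, map_smulₛₗ, ha, adjoint_id, neg_smul, sub_neg_eq_add]

theorem sum_adjoint_comp_clifford {c : ι → S →ₗ[ℂ] S} (hskew : ∀ j, adjoint (c j) = -c j)
    (del : ι → S →ₗ[ℂ] S) : ∑ j, adjoint (del j) ∘ₗ c j = -adjoint (dirac c del) := by
  simp only [dirac, map_sum, adjoint_comp, hskew, comp_neg, Finset.sum_neg_distrib, neg_neg]

theorem connLaplacian_twist {c del : ι → S →ₗ[ℂ] S} (hskew : ∀ j, adjoint (c j) = -c j)
    (hsq : ∀ j, c j ∘ₗ c j = -LinearMap.id) (hsym : adjoint (dirac c del) = dirac c del) {a : ℂ}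
    (ha : starRingEnd ℂ a = -a) :
    connLaplacian (twist del c a)
      = connLaplacian del - ((Fintype.card ι : ℂ) * (a * a)) • LinearMap.id := by
  have cross := sum_adjoint_comp_clifford hskew del
  have hD : ∑ j, c j ∘ₗ del j = dirac c del := rfl
  simp only [connLaplacian, twist, adjoint_add_smul (hskew _) ha, add_comp, comp_add, smul_comp,
    comp_smul, hsq, Finset.sum_add_distrib, ← Finset.smul_sum, Finset.sum_neg_distrib,
    Finset.sum_const, Finset.card_univ, ← Nat.cast_smul_eq_nsmul ℂ, cross, hsym, hD]
  module

theorem adjoint_comp_sub_smul_id {D : S →ₗ[ℂ] S} (hsym : adjoint D = D) {b : ℂ}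
    (hb : starRingEnd ℂ b = -b) :
    adjoint (D - b • LinearMap.id) ∘ₗ (D - b • LinearMap.id)
      = D ∘ₗ D - (b * b) • LinearMap.id := by
  rw [adjoint_sub_smul_id hb, hsym]
  simp only [add_comp, comp_sub, smul_comp, comp_smul, comp_id, id_comp]
  module

end ModifiedDirac

open ModifiedDirac

/-- Modified Schrödinger–Lichnerowicz formula (pointwise algebraic model with formal
adjoints realized as adjoints on a finite-dimensional complex inner product space):
with `D̄ = Σ_j c(e_j)∇̄_j`, `∇̄*∇̄ = Σ_j (∇̄_j)*∇̄_j`, `D̄² = ∇̄*∇̄ + ℛ`, `D̄` symmetric,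
and `∇̃^±_j = ∇̄_j ± (i/2)c(e_j)`, `D̃^± = Σ_j c(e_j)∇̃^±_j`, one has
`D̃^± = D̄ ∓ (in/2)Id`, `(∇̃^±)*∇̃^± = ∇̄*∇̄ + (n/4)Id`, and
`(D̃^±)*D̃^± = (∇̃^±)*∇̃^± + ℛ + (n(n-1)/4)Id`. -/
theorem stmt11 {n : ℕ} {S : Type*} [NormedAddCommGroup S] [InnerProductSpace ℂ S]
    [FiniteDimensional ℂ S]
    (c del : Fin n → S →ₗ[ℂ] S)
    (hskew : ∀ j, LinearMap.adjoint (c j) = -(c j))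
    (hcliff : ∀ i j, c i ∘ₗ c j + c j ∘ₗ c i
      = if i = j then (-2 : ℂ) • LinearMap.id else 0)
    (Dbar Ndel R : S →ₗ[ℂ] S)
    (hD : Dbar = ∑ j, c j ∘ₗ del j)
    (hN : Ndel = ∑ j, LinearMap.adjoint (del j) ∘ₗ del j)
    (hSL : Dbar ∘ₗ Dbar = Ndel + R)
    (hsym : LinearMap.adjoint Dbar = Dbar)
    (delp delm : Fin n → S →ₗ[ℂ] S)
    (hdelp : ∀ j, delp j = del j + (Complex.I / 2) • c j)
    (hdelm : ∀ j, delm j = del j - (Complex.I / 2) • c j)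
    (Dp Dm : S →ₗ[ℂ] S)
    (hDp : Dp = ∑ j, c j ∘ₗ delp j) (hDm : Dm = ∑ j, c j ∘ₗ delm j) :
    (Dp = Dbar - (((n : ℂ) / 2) * Complex.I) • LinearMap.id ∧
     Dm = Dbar + (((n : ℂ) / 2) * Complex.I) • LinearMap.id) ∧
    ((∑ j, LinearMap.adjoint (delp j) ∘ₗ delp j)
        = Ndel + ((n : ℂ) / 4) • LinearMap.id ∧
     (∑ j, LinearMap.adjoint (delm j) ∘ₗ delm j)
        = Ndel + ((n : ℂ) / 4) • LinearMap.id) ∧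
    (LinearMap.adjoint Dp ∘ₗ Dp
        = (∑ j, LinearMap.adjoint (delp j) ∘ₗ delp j) + R
          + (((n : ℂ) * ((n : ℂ) - 1)) / 4) • LinearMap.id ∧
     LinearMap.adjoint Dm ∘ₗ Dm
        = (∑ j, LinearMap.adjoint (delm j) ∘ₗ delm j) + R
          + (((n : ℂ) * ((n : ℂ) - 1)) / 4) • LinearMap.id) := by
  have hsq j : c j ∘ₗ c j = -LinearMap.id := comp_self_eq_neg_id (by simpa using hcliff j j)
  obtain rfl : delp = twist del c (Complex.I / 2) := funext hdelp
  obtain rfl : delm = twist del c (-(Complex.I / 2)) :=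
    funext fun j => (hdelm j).trans (by rw [twist, neg_smul, ← sub_eq_add_neg])
  change Dbar = dirac c del at hD
  change Dp = dirac c _ at hDp
  change Dm = dirac c _ at hDm
  subst hD hN hDp hDm
  have hI : starRingEnd ℂ (Complex.I / 2) = -(Complex.I / 2) := by
    simp [map_div₀, Complex.conj_ofNat, neg_div]
  have hI' : starRingEnd ℂ (-(Complex.I / 2)) = -(-(Complex.I / 2)) := by rw [map_neg, hI]
  have hp := dirac_twist hsq del (Complex.I / 2)
  have hm := dirac_twist hsq del (-(Complex.I / 2))
  have hLp := connLaplacian_twist hskew hsq hsym hI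
  have hLm := connLaplacian_twist hskew hsq hsym hI'
  simp only [Fintype.card_fin, connLaplacian] at hp hm hLp hLm
  rw [hp, hm, hLp, hLm, adjoint_comp_sub_smul_id hsym (by rw [map_mul, map_natCast, hI, mul_neg]),
    adjoint_comp_sub_smul_id hsym (by rw [map_mul, map_natCast, hI', mul_neg]), hSL]
  refine ⟨⟨?_, ?_⟩, ⟨?_, ?_⟩, ?_, ?_⟩ <;> match_scalars
  all_goals grind [Complex.I_sq]
end

section
/- Let ℋ be a complex Hilbert space, let c be a skew-adjoint unitary operator (c* = -c, c² = -Id), let 𝒟⁻ be a self-adjoint operator with 𝒟⁺ := 𝒟⁻ + i(n-1)c satisfying the intertwining relation 𝒟⁺(cψ) = -c(𝒟⁻ψ) for all ψ in the domain. If ψ_k, ψ_l are eigenvectors of 𝒟⁻ with real eigenvalues μ_k, μ_l satisfying μ_k + μ_l ≠ 0 and ⟨ψ_k, ψ_l⟩ = δ_{kl}, then -i⟨cψ_k, ψ_l⟩ = (n-1)/(μ_k + μ_l) · δ_{kl}. -/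
local notation "⟪" x ", " y "⟫" => @inner ℂ _ _ x y

/-! The intertwining relation shows that `c` almost swaps the eigenspaces of `𝒟⁻`:
`𝒟⁻(cψ_k) = -μ_k cψ_k + i(n-1)ψ_k`. Pairing this with `ψ_l` and moving `𝒟⁻` across by
symmetry gives `(μ_k + μ_l)⟪ψ_l, cψ_k⟫ = i(n-1)⟪ψ_l, ψ_k⟫`, which is the claim. -/

theorem LinearMap.apply_eigenvector_of_intertwine {R M : Type*} [CommRing R] [AddCommGroup M]
    [Module R M] {c D D' : M →ₗ[R] M} {a μ : R} {ψ : M}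
    (hcsq : c ∘ₗ c = -LinearMap.id) (hD' : D' = D + a • c) (hint : D' (c ψ) = -c (D ψ))
    (he : D ψ = μ • ψ) :
    D (c ψ) = -μ • c ψ + a • ψ := by
  have hcc : c (c ψ) = -ψ := by simpa using LinearMap.congr_fun hcsq ψ
  rw [hD', LinearMap.add_apply, LinearMap.smul_apply, hcc, he, map_smul] at hint
  rw [eq_sub_of_add_eq hint]
  module

theorem LinearMap.IsSymmetric.add_mul_inner_eq {𝕜 E : Type*} [RCLike 𝕜] [NormedAddCommGroup E]
    [InnerProductSpace 𝕜 E] {T : E →ₗ[𝕜] E} (hT : T.IsSymmetric) {u v w : E} {a : 𝕜} {μ ν : ℝ}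
    (hu : T u = (-μ : 𝕜) • u + a • v) (hw : T w = (ν : 𝕜) • w) :
    ((μ + ν : ℝ) : 𝕜) * inner 𝕜 w u = a * inner 𝕜 w v := by
  have h := hT w u
  rw [hu, hw, inner_smul_left, inner_add_right, inner_smul_right, inner_smul_right,
    RCLike.conj_ofReal] at h
  push_cast
  linear_combination h

-- `⟪x, y⟫` is conjugate-linear in `x`, so `⟪ψ l, c (ψ k)⟫` is the paper's `⟨cψ_k, ψ_l⟩`.
theorem stmt15_general {H : Type*} [NormedAddCommGroup H] [InnerProductSpace ℂ H]
    (n : ℕ)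
    (c Dm Dp : H →ₗ[ℂ] H)
    (hcsq : c ∘ₗ c = -LinearMap.id)
    (hDmsym : ∀ x y : H, ⟪Dm x, y⟫ = ⟪x, Dm y⟫)
    (hDp : Dp = Dm + (((n : ℂ) - 1) * Complex.I) • c)
    (hint : ∀ ψ : H, Dp (c ψ) = -c (Dm ψ))
    {ι : Type*} [DecidableEq ι] (k l : ι) (ψ : ι → H) (μ : ι → ℝ)
    (hek : Dm (ψ k) = (μ k : ℂ) • ψ k)
    (hel : Dm (ψ l) = (μ l : ℂ) • ψ l)
    (hμ : μ k + μ l ≠ 0)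
    (horth : ⟪ψ k, ψ l⟫ = if k = l then 1 else 0) :
    -Complex.I * ⟪ψ l, c (ψ k)⟫
      = ((((n : ℝ) - 1) / (μ k + μ l)) : ℂ) * (if k = l then 1 else 0) := by
  have horth' : ⟪ψ l, ψ k⟫ = if k = l then 1 else 0 := by
    rw [← inner_conj_symm, horth]
    split_ifs <;> simp
  have hDmc := LinearMap.apply_eigenvector_of_intertwine hcsq hDp (hint (ψ k)) hek
  have hpair := LinearMap.IsSymmetric.add_mul_inner_eq hDmsym hDmc hel
  rw [horth'] at hpair
  have hμ' : ((μ k + μ l : ℝ) : ℂ) ≠ 0 := Complex.ofReal_ne_zero.mpr hμ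
  push_cast at hpair hμ' ⊢
  rw [div_mul_eq_mul_div, eq_div_iff hμ']
  linear_combination (-Complex.I) * hpair - ((n : ℂ) - 1) * (if k = l then 1 else 0) * Complex.I_sq

/-- Spectral boundary identity: with `c` skew-adjoint, `c² = -Id`, `𝒟⁻` self-adjoint,
`𝒟⁺ = 𝒟⁻ + i(n-1)c` and `𝒟⁺(cψ) = -c(𝒟⁻ψ)`, for orthonormal eigenvectors
`𝒟⁻ψ_k = μ_kψ_k`, `𝒟⁻ψ_l = μ_lψ_l` with `μ_k + μ_l ≠ 0` one has
`-i⟨cψ_k, ψ_l⟩ = (n-1)/(μ_k+μ_l)·δ_{kl}` (inner products written in the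
convention linear in the first slot, i.e. `⟨a,b⟩ = ⟪b, a⟫`). -/
theorem stmt15 {H : Type*} [NormedAddCommGroup H] [InnerProductSpace ℂ H]
    (n : ℕ) (hn : 2 ≤ n)
    (c Dm Dp : H →ₗ[ℂ] H)
    (hcskew : ∀ x y : H, ⟪c x, y⟫ = -⟪x, c y⟫)
    (hcsq : c ∘ₗ c = -LinearMap.id)
    (hDmsym : ∀ x y : H, ⟪Dm x, y⟫ = ⟪x, Dm y⟫)
    (hDp : Dp = Dm + (((n : ℂ) - 1) * Complex.I) • c)
    (hint : ∀ ψ : H, Dp (c ψ) = -c (Dm ψ))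
    {ι : Type*} [DecidableEq ι] (k l : ι) (ψ : ι → H) (μ : ι → ℝ)
    (hek : Dm (ψ k) = (μ k : ℂ) • ψ k)
    (hel : Dm (ψ l) = (μ l : ℂ) • ψ l)
    (hμ : μ k + μ l ≠ 0)
    (horth : ⟪ψ k, ψ l⟫ = if k = l then 1 else 0) :
    -Complex.I * ⟪ψ l, c (ψ k)⟫
      = ((((n : ℝ) - 1) / (μ k + μ l)) : ℂ) * (if k = l then 1 else 0) :=
  stmt15_general n c Dm Dp hcsq hDmsym hDp hint k l ψ μ hek hel hμ horth
end
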